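/- If f belongs to 𝓛(F)_ℂ, then so does the function x ↦ |f(x)|. -/

import Mathlib

noncomputable section

open MeasureTheory

/-- A field `F` with a split valuation `ν : F^× → Γ` (split by `t`), with residue field `k`,
residue map `ρ : O_F → k`, where `Γ` has a minimal positive element `one`. -/
structure LiftSetup (Γ F k : Type*) [AddCommGroup Γ] [LinearOrder Γ] [IsOrderedAddMonoid Γ] [Field F] [Field k] where
  /-- the valuation (recorded on nonzero elements) -/
  ν : F → Γ
  /-- the splitting homomorphism `t : Γ → F^×` -/
  t : Γ → F
  /-- the residue map (recorded on the valuation ring) -/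
  ρ : F → k
  /-- the minimal positive element of `Γ` -/
  one : Γ
  one_pos : 0 < one
  one_min : ∀ γ : Γ, 0 < γ → one ≤ γ
  ν_mul : ∀ x y : F, x ≠ 0 → y ≠ 0 → ν (x * y) = ν x + ν y
  ν_add : ∀ x y : F, x ≠ 0 → y ≠ 0 → x + y ≠ 0 → min (ν x) (ν y) ≤ ν (x + y)
  t_ne : ∀ γ : Γ, t γ ≠ 0
  t_add : ∀ γ δ : Γ, t (γ + δ) = t γ * t δ
  ν_t : ∀ γ : Γ, ν (t γ) = γ
  ρ_add : ∀ x y : F, (x = 0 ∨ 0 ≤ ν x) → (y = 0 ∨ 0 ≤ ν y) → ρ (x + y) = ρ x + ρ y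
  ρ_mul : ∀ x y : F, (x = 0 ∨ 0 ≤ ν x) → (y = 0 ∨ 0 ≤ ν y) → ρ (x * y) = ρ x * ρ y
  ρ_one : ρ 1 = 1
  ρ_surj : ∀ u : k, ∃ x : F, (x = 0 ∨ 0 ≤ ν x) ∧ ρ x = u
  ρ_eq_zero : ∀ x : F, (x = 0 ∨ 0 ≤ ν x) → (ρ x = 0 ↔ (x = 0 ∨ 0 < ν x))

namespace LiftSetup

variable {Γ F k : Type*} [AddCommGroup Γ] [LinearOrder Γ] [IsOrderedAddMonoid Γ] [Field F] [Field k]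
variable (S : LiftSetup Γ F k)

/-- The ring of integers `O_F` of the valuation. -/
def integers : Set F := {x | x = 0 ∨ 0 ≤ S.ν x}

/-- The translated fractional ideal `a + t(γ)O_F`. -/
def fracIdeal (a : F) (γ : Γ) : Set F := {x | (x - a) * S.t (-γ) ∈ S.integers}

/-- The lift `f^{a,γ}` of a function `f` on the residue field `k`:
`f^{a,γ}(x) = f(ρ((x-a)t(-γ)))` for `x ∈ a + t(γ)O_F` and `0` otherwise. -/
def lift {A : Type*} [Zero A] (f : k → A) (a : F) (γ : Γ) : F → A :=
  (S.fracIdeal a γ).indicator fun x => f (S.ρ ((x - a) * S.t (-γ)))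

/-- The homomorphism `η : F^× → k^×`, `x ↦ ρ(x t(-ν x))`. -/
def η (x : F) : k := S.ρ (x * S.t (-S.ν x))

end LiftSetup

/-!
Write `f` as a finite sum of lifts and induct on the number of terms, proving more generally that
`φ ∘ f` lies in the span for every Lipschitz `φ` with `φ 0 = 0`. Let `p` be a term with the largest
ball and `q` one with the next largest. If they share their ball, merge them into a single lift
(translation invariance of the Haar measure keeps the merged function integrable). Otherwise the
lift of `p` is constant, say `c`, on the ball `D` of `q`, and by the ultrametric property every
other ball lies inside `D` or misses it. So `f = g + h` with `g = c` on `D` and `h` supported in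
`D`, whence `φ ∘ f = φ ∘ g + φ_c ∘ h` for `φ_c w = φ (c + w) - φ c`, and both `g` and `h` are
shorter sums.
-/

/-- The data `(f, a, γ)` of the lift `f^{a,γ}`. -/
structure LiftDatum (Γ F k : Type*) where
  fn : k → ℂ
  center : F
  level : Γ

lemma comp_add_eq_of_eqOn {α M N : Type*} [AddZeroClass M] [AddCommGroup N] {φ : M → N}
    {g h : α → M} {D : Set α} {c : M} (hg : Set.EqOn g (fun _ => c) D) (hh : Set.EqOn h 0 Dᶜ) :
    φ ∘ (g + h) = φ ∘ g + (fun w => φ (c + w) - φ c) ∘ h := by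
  funext x
  by_cases hx : x ∈ D
  · simp [hg hx]
  · simp [hh hx]

namespace LiftSetup

variable {Γ F k : Type*} [AddCommGroup Γ] [LinearOrder Γ] [IsOrderedAddMonoid Γ] [Field F] [Field k]
variable (S : LiftSetup Γ F k)

lemma ν_one : S.ν 1 = 0 := by
  have h := S.ν_mul 1 1 one_ne_zero one_ne_zero
  rw [mul_one] at h
  grind

lemma ν_neg_one : S.ν (-1) = 0 := by
  have h := S.ν_mul (-1) (-1) (by norm_num) (by norm_num)
  rw [neg_mul_neg, one_mul, ν_one] at h
  grind

variable {S}

lemma mul_mem_integers {x y : F} (hx : x ∈ S.integers) (hy : y ∈ S.integers) :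
    x * y ∈ S.integers := by
  rcases eq_or_ne x 0 with rfl | hx0
  · exact Or.inl (zero_mul y)
  rcases eq_or_ne y 0 with rfl | hy0
  · exact Or.inl (mul_zero x)
  exact Or.inr (S.ν_mul x y hx0 hy0 ▸ add_nonneg (hx.resolve_left hx0) (hy.resolve_left hy0))

lemma neg_mem_integers {x : F} (hx : x ∈ S.integers) : -x ∈ S.integers := by
  rw [← neg_one_mul]
  exact mul_mem_integers (Or.inr S.ν_neg_one.ge) hx

lemma add_mem_integers {x y : F} (hx : x ∈ S.integers) (hy : y ∈ S.integers) :
    x + y ∈ S.integers := by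
  rcases eq_or_ne x 0 with rfl | hx0
  · rwa [zero_add]
  rcases eq_or_ne y 0 with rfl | hy0
  · rwa [add_zero]
  rcases eq_or_ne (x + y) 0 with hxy | hxy
  · exact Or.inl hxy
  exact Or.inr
    ((le_min (hx.resolve_left hx0) (hy.resolve_left hy0)).trans (S.ν_add x y hx0 hy0 hxy))

lemma sub_mem_integers {x y : F} (hx : x ∈ S.integers) (hy : y ∈ S.integers) :
    x - y ∈ S.integers :=
  sub_eq_add_neg x y ▸ add_mem_integers hx (neg_mem_integers hy)

lemma t_mem_integers {δ : Γ} (hδ : 0 ≤ δ) : S.t δ ∈ S.integers :=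
  Or.inr ((S.ν_t δ).symm ▸ hδ)

lemma t_neg_eq_mul (γ γ' : Γ) : S.t (-γ) = S.t (-γ') * S.t (γ' - γ) := by
  rw [← S.t_add]
  congr 1
  abel

lemma mul_t_neg_mem_integers_of_le {y : F} {γ γ' : Γ} (hγ : γ ≤ γ')
    (hy : y * S.t (-γ') ∈ S.integers) : y * S.t (-γ) ∈ S.integers := by
  rw [t_neg_eq_mul γ γ', ← mul_assoc]
  exact mul_mem_integers hy (t_mem_integers (sub_nonneg.mpr hγ))

lemma ρ_mul_t_neg_eq_zero_of_lt {y : F} {γ γ' : Γ} (hγ : γ < γ')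
    (hy : y * S.t (-γ') ∈ S.integers) : S.ρ (y * S.t (-γ)) = 0 := by
  have ht : S.t (γ' - γ) ∈ S.integers := t_mem_integers (sub_nonneg.mpr hγ.le)
  have hρt : S.ρ (S.t (γ' - γ)) = 0 :=
    (S.ρ_eq_zero _ ht).mpr (Or.inr (S.ν_t _ ▸ sub_pos.mpr hγ))
  rw [t_neg_eq_mul γ γ', ← mul_assoc, S.ρ_mul _ _ hy ht, hρt, mul_zero]

lemma mem_fracIdeal {x a : F} {γ : Γ} :
    x ∈ S.fracIdeal a γ ↔ (x - a) * S.t (-γ) ∈ S.integers := Iff.rfl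

lemma mem_fracIdeal_self (a : F) (γ : Γ) : a ∈ S.fracIdeal a γ :=
  Or.inl (by rw [sub_self, zero_mul])

lemma mem_fracIdeal_comm {a a' : F} {γ : Γ} : a' ∈ S.fracIdeal a γ ↔ a ∈ S.fracIdeal a' γ := by
  have key : ∀ b b' : F, b' ∈ S.fracIdeal b γ → b ∈ S.fracIdeal b' γ := fun b b' h => by
    rw [mem_fracIdeal, ← neg_sub, neg_mul]
    exact neg_mem_integers h
  exact ⟨key a a', key a' a⟩

lemma fracIdeal_subset_of_mem_of_mem {a a' x : F} {γ γ' : Γ} (hγ : γ ≤ γ')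
    (hx : x ∈ S.fracIdeal a γ) (hx' : x ∈ S.fracIdeal a' γ') :
    S.fracIdeal a' γ' ⊆ S.fracIdeal a γ := fun y hy => by
  have hyx : (y - x) * S.t (-γ) ∈ S.integers := by
    refine mul_t_neg_mem_integers_of_le hγ ?_
    rw [← sub_sub_sub_cancel_right y x a', sub_mul]
    exact sub_mem_integers hy hx'
  rw [mem_fracIdeal, ← sub_add_sub_cancel y x a, add_mul]
  exact add_mem_integers hyx hx

lemma fracIdeal_subset_of_mem {a a' : F} {γ γ' : Γ} (hγ : γ ≤ γ') (ha' : a' ∈ S.fracIdeal a γ) :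
    S.fracIdeal a' γ' ⊆ S.fracIdeal a γ :=
  fracIdeal_subset_of_mem_of_mem hγ ha' (mem_fracIdeal_self a' γ')

lemma disjoint_fracIdeal_of_not_mem {a a' : F} {γ γ' : Γ} (hγ : γ ≤ γ')
    (ha' : a' ∉ S.fracIdeal a γ) : Disjoint (S.fracIdeal a γ) (S.fracIdeal a' γ') :=
  Set.disjoint_left.mpr fun _ hx hx' =>
    ha' (fracIdeal_subset_of_mem_of_mem hγ hx hx' (mem_fracIdeal_self a' γ'))

lemma fracIdeal_eq_of_mem {a a' : F} {γ : Γ} (ha' : a' ∈ S.fracIdeal a γ) :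
    S.fracIdeal a' γ = S.fracIdeal a γ :=
  (fracIdeal_subset_of_mem le_rfl ha').antisymm
    (fracIdeal_subset_of_mem le_rfl (mem_fracIdeal_comm.mp ha'))

lemma lift_add {A : Type*} [AddZeroClass A] (f g : k → A) (a : F) (γ : Γ) :
    S.lift (f + g) a γ = S.lift f a γ + S.lift g a γ :=
  Set.indicator_add' _ _ _

lemma lift_smul {R A : Type*} [Zero A] [SMulZeroClass R A] (c : R) (f : k → A) (a : F) (γ : Γ) :
    S.lift (c • f) a γ = c • S.lift f a γ :=
  Set.indicator_const_smul _ _ _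

lemma comp_lift {A B : Type*} [Zero A] [Zero B] {φ : A → B} (hφ : φ 0 = 0) (f : k → A) (a : F)
    (γ : Γ) : φ ∘ S.lift f a γ = S.lift (φ ∘ f) a γ :=
  (Set.indicator_comp_of_zero hφ).symm

lemma lift_eq_lift_translate {A : Type*} [Zero A] {a a' : F} {γ : Γ}
    (ha' : a' ∈ S.fracIdeal a γ) (f : k → A) :
    S.lift f a' γ = S.lift (fun u => f (u + S.ρ ((a - a') * S.t (-γ)))) a γ := by
  rw [lift, lift, fracIdeal_eq_of_mem ha']
  refine Set.indicator_congr fun x hx => congrArg f ?_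
  rw [← S.ρ_add _ _ hx (mem_fracIdeal_comm.mp ha')]
  congr 1
  ring

lemma lift_add_lift_of_mem {A : Type*} [AddZeroClass A] {a a' : F} {γ : Γ}
    (ha' : a' ∈ S.fracIdeal a γ) (f g : k → A) :
    S.lift f a γ + S.lift g a' γ =
      S.lift (fun u => f u + g (u + S.ρ ((a - a') * S.t (-γ)))) a γ := by
  rw [lift_eq_lift_translate ha' g, ← lift_add]
  rfl

lemma lift_eqOn_of_lt {A : Type*} [Zero A] {a a' : F} {γ γ' : Γ} (hγ : γ < γ')
    (ha' : a' ∈ S.fracIdeal a γ) (f : k → A) :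
    Set.EqOn (S.lift f a γ) (fun _ => f (S.ρ ((a' - a) * S.t (-γ)))) (S.fracIdeal a' γ') :=
  fun x hx => by
  rw [lift, Set.indicator_of_mem (fracIdeal_subset_of_mem hγ.le ha' hx),
    ← sub_add_sub_cancel x a' a, add_mul, S.ρ_add _ _ (mul_t_neg_mem_integers_of_le hγ.le hx) ha',
    ρ_mul_t_neg_eq_zero_of_lt hγ hx, zero_add]

lemma exists_lift_eqOn {A : Type*} [Zero A] {a a' : F} {γ γ' : Γ} (hγ : γ ≤ γ')
    (h : γ < γ' ∨ a' ∉ S.fracIdeal a γ) (f : k → A) :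
    ∃ c, Set.EqOn (S.lift f a γ) (fun _ => c) (S.fracIdeal a' γ') := by
  by_cases ha' : a' ∈ S.fracIdeal a γ
  · exact ⟨_, lift_eqOn_of_lt (h.resolve_right (not_not.mpr ha')) ha' f⟩
  · exact ⟨0, fun x hx =>
      Set.indicator_of_notMem ((disjoint_fracIdeal_of_not_mem hγ ha').notMem_of_mem_right hx) _⟩

variable (S)

def sumLifts (s : Multiset (LiftDatum Γ F k)) : F → ℂ :=
  (s.map fun p => S.lift p.fn p.center p.level).sum

@[simp]
lemma sumLifts_zero : S.sumLifts 0 = 0 := rfl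

@[simp]
lemma sumLifts_cons (p : LiftDatum Γ F k) (s : Multiset (LiftDatum Γ F k)) :
    S.sumLifts (p ::ₘ s) = S.lift p.fn p.center p.level + S.sumLifts s := by
  simp [sumLifts]

@[simp]
lemma sumLifts_add (s s' : Multiset (LiftDatum Γ F k)) :
    S.sumLifts (s + s') = S.sumLifts s + S.sumLifts s' := by
  simp [sumLifts]

variable {S}

lemma sumLifts_eqOn_zero {s : Multiset (LiftDatum Γ F k)} {D : Set F}
    (h : ∀ p ∈ s, Disjoint (S.fracIdeal p.center p.level) D) : Set.EqOn (S.sumLifts s) 0 D := by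
  induction s using Multiset.induction_on with
  | empty => exact fun _ _ => rfl
  | cons p s ih =>
    intro x hx
    rw [sumLifts_cons, Pi.add_apply, ih (fun q hq => h q (Multiset.mem_cons_of_mem hq)) hx,
      lift, Set.indicator_of_notMem ((h p (Multiset.mem_cons_self p s)).notMem_of_mem_right hx),
      Pi.zero_apply, add_zero]

open Classical in
/-- When `q` carries the second largest ball `D`, the sum splits into a part constant on `D` and a
part supported in `D`. -/
lemma exists_comp_sumLifts_eq_add {p q : LiftDatum Γ F k} {u : Multiset (LiftDatum Γ F k)}
    (hpq : p.level ≤ q.level)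
    (hsame : ¬(q.level = p.level ∧ q.center ∈ S.fracIdeal p.center p.level))
    (hu : ∀ r ∈ u, q.level ≤ r.level) (φ : ℂ → ℂ) :
    ∃ c, φ ∘ S.sumLifts (p ::ₘ q ::ₘ u) =
      φ ∘ S.sumLifts (p ::ₘ u.filter fun r => r.center ∉ S.fracIdeal q.center q.level) +
        (fun w => φ (c + w) - φ c) ∘
          S.sumLifts (q ::ₘ u.filter fun r => r.center ∈ S.fracIdeal q.center q.level) := by
  have hnot : p.level < q.level ∨ q.center ∉ S.fracIdeal p.center p.level := by
    rcases hpq.lt_or_eq with h | h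
    · exact Or.inl h
    · exact Or.inr fun hm => hsame ⟨h.symm, hm⟩
  obtain ⟨c, hc⟩ := exists_lift_eqOn hpq hnot p.fn
  refine ⟨c, ?_⟩
  rw [← comp_add_eq_of_eqOn (D := S.fracIdeal q.center q.level)]
  · conv_lhs => rw [← Multiset.filter_add_not (fun r => r.center ∈ S.fracIdeal q.center q.level) u]
    congr 1
    simp only [sumLifts_cons, sumLifts_add]
    abel
  · intro x hx
    have hRx : S.sumLifts (u.filter fun r => r.center ∉ S.fracIdeal q.center q.level) x = 0 :=
      sumLifts_eqOn_zero (fun r hr => (disjoint_fracIdeal_of_not_mem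
        (hu r (Multiset.mem_of_mem_filter hr)) (Multiset.mem_filter.mp hr).2).symm) hx
    rw [sumLifts_cons, Pi.add_apply, hc hx, hRx, add_zero]
  · refine sumLifts_eqOn_zero fun r hr => Set.disjoint_compl_right_iff_subset.mpr ?_
    rcases Multiset.mem_cons.mp hr with rfl | hr
    · exact subset_rfl
    · exact fracIdeal_subset_of_mem (hu r (Multiset.mem_of_mem_filter hr))
        (Multiset.mem_filter.mp hr).2

variable (S) in
def liftSpan [MeasurableSpace k] (μ : Measure k) : Submodule ℂ (F → ℂ) :=
  Submodule.span ℂ {g | ∃ (f₀ : k → ℂ) (a : F) (γ : Γ), Integrable f₀ μ ∧ g = S.lift f₀ a γ}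

section Measure

variable [MeasurableSpace k] {μ : Measure k}

lemma lift_mem_liftSpan {f : k → ℂ} (hf : Integrable f μ) (a : F) (γ : Γ) :
    S.lift f a γ ∈ S.liftSpan μ :=
  Submodule.subset_span ⟨f, a, γ, hf, rfl⟩

lemma exists_sumLifts_eq {f : F → ℂ} (hf : f ∈ S.liftSpan μ) :
    ∃ s : Multiset (LiftDatum Γ F k), (∀ p ∈ s, Integrable p.fn μ) ∧ S.sumLifts s = f := by
  induction hf using Submodule.span_induction with
  | mem g hg =>
    obtain ⟨f₀, a, γ, hf₀, rfl⟩ := hg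
    exact ⟨{⟨f₀, a, γ⟩}, by simpa using hf₀, by simp [sumLifts]⟩
  | zero => exact ⟨0, by simp, rfl⟩
  | add g g' _ _ ih ih' =>
    obtain ⟨s, hs, rfl⟩ := ih
    obtain ⟨s', hs', rfl⟩ := ih'
    exact ⟨s + s', by simpa [or_imp, forall_and] using ⟨hs, hs'⟩, sumLifts_add S s s'⟩
  | smul c g _ ih =>
    obtain ⟨s, hs, rfl⟩ := ih
    refine ⟨s.map fun p => ⟨c • p.fn, p.center, p.level⟩, ?_, ?_⟩
    · simpa using fun p hp => (hs p hp).smul c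
    · simp [sumLifts, lift_smul, Multiset.smul_sum]

variable [MeasurableAdd k] [μ.IsAddRightInvariant]

theorem comp_sumLifts_mem_liftSpan {φ : ℂ → ℂ} {K : NNReal} (hφ : LipschitzWith K φ)
    (hφ0 : φ 0 = 0) {s : Multiset (LiftDatum Γ F k)} (hs : ∀ p ∈ s, Integrable p.fn μ) :
    φ ∘ S.sumLifts s ∈ S.liftSpan μ := by
  classical
  induction hn : Multiset.card s using Nat.strong_induction_on generalizing s φ with
  | _ n ih =>
  rcases eq_or_ne s 0 with rfl | hs0
  · convert (S.liftSpan μ).zero_mem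
    exact funext fun _ => hφ0
  obtain ⟨p, hp, hpmin⟩ := Multiset.exists_min_image LiftDatum.level hs0
  obtain ⟨t, rfl⟩ : ∃ t, s = p ::ₘ t := ⟨_, (Multiset.cons_erase hp).symm⟩
  have hpint : Integrable p.fn μ := hs p (Multiset.mem_cons_self p t)
  rcases eq_or_ne t 0 with rfl | ht0
  · rw [sumLifts_cons, sumLifts_zero, add_zero, comp_lift hφ0]
    exact lift_mem_liftSpan (memLp_one_iff_integrable.mp
      (hφ.comp_memLp hφ0 (memLp_one_iff_integrable.mpr hpint))) _ _
  obtain ⟨q, hq, hqmin⟩ := Multiset.exists_min_image LiftDatum.level ht0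
  obtain ⟨u, rfl⟩ : ∃ u, t = q ::ₘ u := ⟨_, (Multiset.cons_erase hq).symm⟩
  have hpq : p.level ≤ q.level := hpmin q (by simp)
  have hcard {x : LiftDatum Γ F k} {v} (hv : v ≤ u) : Multiset.card (x ::ₘ v) < n := by
    have := Multiset.card_le_card hv
    simp only [← hn, Multiset.card_cons]
    omega
  have hint {x : LiftDatum Γ F k} {v} (hx : Integrable x.fn μ) (hv : v ≤ u) :
      ∀ r ∈ x ::ₘ v, Integrable r.fn μ :=
    Multiset.forall_mem_cons.mpr ⟨hx, fun r hr => hs r (by simp [Multiset.subset_of_le hv hr])⟩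
  have hqint : Integrable q.fn μ := hs q (by simp)
  by_cases hsame : q.level = p.level ∧ q.center ∈ S.fracIdeal p.center p.level
  · set m : LiftDatum Γ F k := ⟨fun z => p.fn z + q.fn (z + S.ρ ((p.center - q.center) *
      S.t (-p.level))), p.center, p.level⟩
    have hmerge : S.sumLifts (p ::ₘ q ::ₘ u) = S.sumLifts (m ::ₘ u) := by
      rw [sumLifts_cons, sumLifts_cons, sumLifts_cons, ← add_assoc, hsame.1,
        lift_add_lift_of_mem hsame.2]
    rw [hmerge]
    exact ih _ (hcard le_rfl) hφ hφ0 (hint (hpint.add (hqint.comp_add_right _)) le_rfl) rfl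
  · obtain ⟨c, hc⟩ := exists_comp_sumLifts_eq_add hpq hsame
      (fun r hr => hqmin r (Multiset.mem_cons_of_mem hr)) φ
    have hφc : LipschitzWith K fun w => φ (c + w) - φ c := by
      simpa using (hφ.comp (isometry_add_left c).lipschitz).sub (LipschitzWith.const (φ c))
    have hle := Multiset.filter_le (fun r => r.center ∈ S.fracIdeal q.center q.level) u
    have hle' := Multiset.filter_le (fun r => r.center ∉ S.fracIdeal q.center q.level) u
    rw [hc]
    exact add_mem (ih _ (hcard hle') hφ hφ0 (hint hpint hle') rfl)
      (ih _ (hcard hle) hφc (by simp) (hint hqint hle) rfl)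

theorem comp_mem_liftSpan {φ : ℂ → ℂ} {K : NNReal} (hφ : LipschitzWith K φ) (hφ0 : φ 0 = 0)
    {f : F → ℂ} (hf : f ∈ S.liftSpan μ) : φ ∘ f ∈ S.liftSpan μ := by
  obtain ⟨s, hs, rfl⟩ := exists_sumLifts_eq hf
  exact comp_sumLifts_mem_liftSpan hφ hφ0 hs

end Measure

end LiftSetup

theorem statement1_general
    {Γ F k : Type*} [AddCommGroup Γ] [LinearOrder Γ] [IsOrderedAddMonoid Γ] [Field F] [Field k]
    [TopologicalSpace k] [IsTopologicalRing k]
    [MeasurableSpace k] [BorelSpace k]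
    (μ : Measure k) [μ.IsAddHaarMeasure]
    (S : LiftSetup Γ F k)
    (f : F → ℂ)
    (hf : f ∈ Submodule.span ℂ
      {g : F → ℂ | ∃ (f₀ : k → ℂ) (a : F) (γ : Γ), Integrable f₀ μ ∧ g = S.lift f₀ a γ}) :
    (fun x => ((‖f x‖ : ℝ) : ℂ)) ∈ Submodule.span ℂ
      {g : F → ℂ | ∃ (f₀ : k → ℂ) (a : F) (γ : Γ), Integrable f₀ μ ∧ g = S.lift f₀ a γ} :=
  S.comp_mem_liftSpan (Complex.isometry_ofReal.lipschitz.comp lipschitzWith_one_norm) (by simp) hf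

/-- If `f` belongs to `𝓛(F)_ℂ` (the complex span of the lifts of
Haar-integrable functions on the local field `k`), then so does `x ↦ |f(x)|`. -/
theorem statement1
    {Γ F k : Type*} [AddCommGroup Γ] [LinearOrder Γ] [IsOrderedAddMonoid Γ] [Field F] [Field k]
    [TopologicalSpace k] [IsTopologicalRing k] [LocallyCompactSpace k]
    [MeasurableSpace k] [BorelSpace k]
    (hk_nondiscrete : ¬ IsOpen ({0} : Set k))
    (μ : Measure k) [μ.IsAddHaarMeasure]
    (S : LiftSetup Γ F k)
    (f : F → ℂ)
    (hf : f ∈ Submodule.span ℂ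
      {g : F → ℂ | ∃ (f₀ : k → ℂ) (a : F) (γ : Γ), Integrable f₀ μ ∧ g = S.lift f₀ a γ}) :
    (fun x => ((‖f x‖ : ℝ) : ℂ)) ∈ Submodule.span ℂ
      {g : F → ℂ | ∃ (f₀ : k → ℂ) (a : F) (γ : Γ), Integrable f₀ μ ∧ g = S.lift f₀ a γ} :=
  statement1_general μ S f hf
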